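/- Let tri : ℝ → ℝ be the 2π-periodic triangular wave tri(x) = 1 − (2/π)·arccos(cos x), let g(θ) = tri(3θ), and let n = 2m be an even integer with n ≥ 8. Put θ_k = 2πk/n, ζ_k = exp(θ_k·I) ∈ ℂ, t_n = (π²/(12n))·(1 − 1/n), and z_k = (1 + t_n·g(θ_k))·ζ_k for k ∈ Fin n. Then dist (z_i) (z_j) ≤ 2 for all i, j, and dist (z_k) (z_{k+m}) = 2 for every k (indices taken modulo n). -/

import Mathlib

/-!
Pairing `z_k` with the antipodal index `k + m` flips both `ζ_k` and `g(θ_k)`, so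
`z_k - z_{k+m} = 2 ζ_k`. For arbitrary `i, j` write `θ_i - θ_j = π + δ` and let `v ∈ [0, π]` be the
distance from `δ` to `2πℤ`, a multiple of `2π/n`. As `g` is antiperiodic and `6/π`-Lipschitz for the
circle distance, `g(θ_i) + g(θ_j) ≤ 6v/π`, and the law of cosines reduces `|z_i - z_j| ≤ 2` to
`2 t_n (g(θ_i) + g(θ_j)) ≤ (1 - t_n²)(1 - cos v)`. This is trivial when the left side is `≤ 0`
(in particular when `v = 0`) or when `cos v ≤ 0`; for `2π/n ≤ v ≤ π/2` it follows from
`1 - cos v ≥ v²/2 - v⁴/24`, and the constant `t_n` is chosen so that it still holds at `v = 2π/n`.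
-/

noncomputable def tri (x : ℝ) : ℝ := 1 - 2 / Real.pi * Real.arccos (Real.cos x)

noncomputable def g (θ : ℝ) : ℝ := tri (3 * θ)

open Real

lemma arccos_cos_eq_norm_addCircle (x : ℝ) :
    arccos (cos x) = ‖(x : AddCircle (2 * π))‖ := by
  have hle : ‖(x : AddCircle (2 * π))‖ ≤ π := by
    simpa [abs_of_pos pi_pos] using
      AddCircle.norm_le_half_period (2 * π) (x := (x : AddCircle (2 * π))) (by positivity)
  rw [AddCircle.norm_eq] at hle ⊢
  rw [← cos_sub_int_mul_two_pi x (round ((2 * π)⁻¹ * x)), ← cos_abs]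
  exact arccos_cos (abs_nonneg _) hle

lemma tri_eq (x : ℝ) : tri x = 1 - 2 / π * ‖(x : AddCircle (2 * π))‖ := by
  rw [tri, arccos_cos_eq_norm_addCircle]

lemma abs_tri_le_one (x : ℝ) : |tri x| ≤ 1 := by
  have h₀ := arccos_nonneg (cos x)
  have h₁ : arccos (cos x) / π ≤ 1 := div_le_one_of_le₀ (arccos_le_pi _) pi_pos.le
  rw [tri, ← mul_div_right_comm, mul_div_assoc, abs_le]
  constructor <;> nlinarith [div_nonneg h₀ pi_pos.le]

lemma abs_g_le_one (θ : ℝ) : |g θ| ≤ 1 := abs_tri_le_one _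

lemma tri_antiperiodic : Function.Antiperiodic tri π := fun x => by
  rw [tri, tri, cos_add_pi, arccos_neg]
  field_simp [pi_ne_zero]
  ring

lemma g_antiperiodic : Function.Antiperiodic g π := fun θ => by
  have := tri_antiperiodic.nat_odd_mul_antiperiodic 1 (3 * θ)
  rw [g, g, ← this]
  ring_nf

lemma g_periodic : Function.Periodic g (2 * π) := g_antiperiodic.periodic_two_mul

lemma g_sub_le (x y : ℝ) : g x - g y ≤ 6 / π * ‖((x - y : ℝ) : AddCircle (2 * π))‖ := by
  have hnorm : |‖((3 * x : ℝ) : AddCircle (2 * π))‖ - ‖((3 * y : ℝ) : AddCircle (2 * π))‖|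
      ≤ 3 * ‖((x - y : ℝ) : AddCircle (2 * π))‖ :=
    calc _ ≤ ‖((3 * x : ℝ) : AddCircle (2 * π)) - ((3 * y : ℝ) : AddCircle (2 * π))‖ :=
          abs_norm_sub_norm_le _ _
      _ = ‖(3 : ℕ) • ((x - y : ℝ) : AddCircle (2 * π))‖ := by
          rw [← AddCircle.coe_sub, ← AddCircle.coe_nsmul]; congr 2; ring
      _ ≤ 3 * ‖((x - y : ℝ) : AddCircle (2 * π))‖ := by
          simpa using norm_nsmul_le (n := 3) (a := ((x - y : ℝ) : AddCircle (2 * π)))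
  rw [g, g, tri_eq, tri_eq]
  have h6 : 6 / π = 2 / π * 3 := by ring
  rw [h6, mul_assoc]
  nlinarith [show 0 < 2 / π by positivity, neg_abs_le
    (‖((3 * x : ℝ) : AddCircle (2 * π))‖ - ‖((3 * y : ℝ) : AddCircle (2 * π))‖)]

lemma AddCircle.norm_coe_mul_div_eq_zero_or_div_le {p : ℝ} (hp : 0 < p) {n : ℕ} (hn : 0 < n)
    (d : ℤ) :
    ‖((p * d / n : ℝ) : AddCircle p)‖ = 0 ∨ p / n ≤ ‖((p * d / n : ℝ) : AddCircle p)‖ := by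
  have hnR : (0 : ℝ) < n := by exact_mod_cast hn
  set r := round (p⁻¹ * (p * d / n))
  have hmul : p * d / n - r * p = p / n * ((d - r * n : ℤ) : ℝ) := by
    push_cast; field_simp
  rw [AddCircle.norm_eq, hmul, abs_mul, abs_of_pos (by positivity)]
  rcases eq_or_ne (d - r * n) 0 with h | h
  · simp [h]
  · right
    have : (1 : ℝ) ≤ |((d - r * n : ℤ) : ℝ)| := by exact_mod_cast Int.one_le_abs h
    nlinarith [show 0 < p / n by positivity]

lemma sq_div_two_sub_pow_four_div_le_one_sub_cos {v : ℝ} (hv₀ : 0 ≤ v) (hv : v ^ 2 ≤ 24) :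
    v ^ 2 / 2 - v ^ 4 / 24 ≤ 1 - cos v := by
  have hsin := sin_ge_sub_cube (x := v / 2) (by positivity)
  have hhalf : 1 - cos v = 2 * sin (v / 2) ^ 2 := by
    rw [sin_sq_eq_half_sub]; ring_nf
  have hlow : 0 ≤ v / 2 - (v / 2) ^ 3 / 6 := by nlinarith
  rw [hhalf]
  nlinarith [pow_le_pow_left₀ hlow hsin 2, sq_nonneg (v ^ 3)]

noncomputable def amplitude (N : ℝ) : ℝ := π ^ 2 / (12 * N) * (1 - 1 / N)

lemma amplitude_eq (N : ℝ) : amplitude N = π ^ 2 / 12 * N⁻¹ * (1 - N⁻¹) := by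
  rw [amplitude]; ring

lemma amplitude_nonneg {N : ℝ} (hN : 1 ≤ N) : 0 ≤ amplitude N := by
  rw [amplitude_eq]
  exact mul_nonneg (by positivity) (sub_nonneg.2 (inv_le_one_of_one_le₀ hN))

lemma amplitude_le {N : ℝ} (hN : 8 ≤ N) : amplitude N ≤ 1 / 8 := by
  have he : N⁻¹ ≤ 1 / 8 := by rw [one_div]; exact inv_anti₀ (by norm_num) hN
  have he0 : 0 ≤ N⁻¹ := by positivity
  have hπ := pi_lt_d2
  rw [amplitude_eq]
  nlinarith [pi_pos, mul_nonneg he0 he0]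

lemma two_mul_amplitude_mul_le_of_le_pi_div_two {N v : ℝ} (hN : 8 ≤ N) (hv : 2 * π / N ≤ v)
    (hv' : v ≤ π / 2) : 2 * amplitude N * (6 / π * v) ≤ (1 - amplitude N ^ 2) * (1 - cos v) := by
  set e := N⁻¹ with he_def
  set t := amplitude N
  have hπ₀ := pi_pos
  have hπ₁ := pi_gt_d2
  have hπ₂ := pi_lt_d2
  have he0 : 0 < e := by positivity
  have he : e ≤ 1 / 8 := by rw [one_div]; exact inv_anti₀ (by norm_num) hN
  have ht : t = π ^ 2 / 12 * e * (1 - e) := amplitude_eq N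
  have ht0 : 0 ≤ t := amplitude_nonneg (by linarith)
  have hte : t ≤ π ^ 2 / 12 * e := by rw [ht]; nlinarith [sq_nonneg π]
  have hu : 2 * π * e ≤ v := by rwa [he_def, ← div_eq_mul_inv]
  have hv0 : 0 ≤ v := le_trans (by positivity) hu
  have hv2 : v ≤ 1.6 := by linarith
  have hπsq : π ^ 2 ≤ 9.93 := by nlinarith
  -- `v ↦ v * (1 - v ^ 2 / 12)` is increasing on `[0, 2]`
  have hmono : 2 * π * e * (1 - (2 * π * e) ^ 2 / 12) ≤ v * (1 - v ^ 2 / 12) := by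
    have hu0 : 0 ≤ 2 * π * e := by positivity
    have : v ^ 2 + v * (2 * π * e) + (2 * π * e) ^ 2 ≤ 12 := by
      nlinarith [mul_le_mul hu hu hu0 (hu0.trans hu)]
    nlinarith [mul_nonneg (sub_nonneg.2 hu) (sub_nonneg.2 this)]
  have hsmall : t ^ 2 + (2 * π * e) ^ 2 / 12 ≤ e := by
    have := pow_le_pow_left₀ ht0 hte 2
    nlinarith [mul_pos he0 he0]
  have ht1 : 0 ≤ 1 - t ^ 2 := by nlinarith
  -- the bound at the smallest admissible angle `v = 2πe`, where `t` is nearly critical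
  have hbase : 1 - e ≤ (1 - t ^ 2) * (1 - (2 * π * e) ^ 2 / 12) := by
    nlinarith [mul_nonneg (sq_nonneg t) (sq_nonneg (2 * π * e))]
  have hcos := sq_div_two_sub_pow_four_div_le_one_sub_cos (v := v) hv0 (by nlinarith)
  calc 2 * t * (6 / π * v) = v / 2 * (2 * π * e) * (1 - e) := by
        rw [ht]; field_simp; ring
    _ ≤ v / 2 * (2 * π * e) * ((1 - t ^ 2) * (1 - (2 * π * e) ^ 2 / 12)) := by
        gcongr
    _ = v / 2 * (1 - t ^ 2) * (2 * π * e * (1 - (2 * π * e) ^ 2 / 12)) := by ring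
    _ ≤ v / 2 * (1 - t ^ 2) * (v * (1 - v ^ 2 / 12)) := by gcongr
    _ = (1 - t ^ 2) * (v ^ 2 / 2 - v ^ 4 / 24) := by ring
    _ ≤ (1 - t ^ 2) * (1 - cos v) := by gcongr

lemma two_mul_amplitude_mul_le {N v w : ℝ} (hN : 8 ≤ N) (hvπ : v ≤ π) (hv : v = 0 ∨ 2 * π / N ≤ v)
    (hw : w ≤ 2) (hwv : w ≤ 6 / π * v) :
    2 * amplitude N * w ≤ (1 - amplitude N ^ 2) * (1 - cos v) := by
  have ht0 := amplitude_nonneg (by linarith : (1 : ℝ) ≤ N)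
  have ht1 := amplitude_le hN
  have ht2 : 1 / 2 ≤ 1 - amplitude N ^ 2 := by nlinarith
  have hcos := cos_le_one v
  rcases le_or_gt w 0 with hw0 | hw0
  · nlinarith [mul_nonneg (by linarith : 0 ≤ 1 - amplitude N ^ 2) (sub_nonneg.2 hcos)]
  have hvN : 2 * π / N ≤ v := hv.resolve_left fun h => by simp [h] at hwv; linarith
  rcases le_or_gt v (π / 2) with hsmall | hlarge
  · calc 2 * amplitude N * w ≤ 2 * amplitude N * (6 / π * v) := by gcongr
      _ ≤ _ := two_mul_amplitude_mul_le_of_le_pi_div_two hN hvN hsmall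
  · have : cos v ≤ 0 := cos_nonpos_of_pi_div_two_le_of_le hlarge.le (by linarith [pi_pos])
    nlinarith [mul_le_mul_of_nonneg_left hw ht0]

lemma sq_add_sq_add_two_mul_mul_le_four {t h h' x : ℝ} (ht0 : 0 ≤ t) (ht1 : t ≤ 1)
    (hh : |h| ≤ 1) (hh' : |h'| ≤ 1) (hx : x ≤ 1)
    (hw : 2 * t * (h + h') ≤ (1 - t ^ 2) * (1 - x)) :
    (1 + t * h) ^ 2 + (1 + t * h') ^ 2 + 2 * ((1 + t * h) * (1 + t * h')) * x ≤ 4 := by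
  obtain ⟨hh₁, hh₂⟩ := abs_le.1 hh
  obtain ⟨hh'₁, hh'₂⟩ := abs_le.1 hh'
  have ha : 0 ≤ 1 + t * h := by nlinarith
  have hb : 0 ≤ 1 + t * h' := by nlinarith
  have hexpand : (1 + t * h) ^ 2 + (1 + t * h') ^ 2 + 2 * ((1 + t * h) * (1 + t * h')) * x
      = 4 + 4 * (t * (h + h')) + (t * (h + h')) ^ 2
        - 2 * ((1 + t * h) * (1 + t * h')) * (1 - x) := by
    ring
  rw [hexpand]
  rcases le_or_gt (t * (h + h')) 0 with hq | hq
  · nlinarith [mul_nonneg (mul_nonneg ha hb) (sub_nonneg.2 hx)]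
  · have hab : 1 + t * (h + h') - t ^ 2 ≤ (1 + t * h) * (1 + t * h') := by
      nlinarith [mul_nonneg (sq_nonneg t) (show 0 ≤ h * h' + 1 by nlinarith)]
    have hqc : t * (h + h') ≤ 2 * (1 - x) := by
      nlinarith [mul_nonneg (sq_nonneg t) (sub_nonneg.2 hx)]
    nlinarith [mul_le_mul_of_nonneg_right hab (sub_nonneg.2 hx),
      mul_le_mul_of_nonneg_left hqc hq.le]

lemma dist_ofReal_mul_exp_sq (r s θ φ : ℝ) :
    dist ((r : ℂ) * Complex.exp (θ * Complex.I)) ((s : ℂ) * Complex.exp (φ * Complex.I)) ^ 2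
      = r ^ 2 + s ^ 2 - 2 * (r * s) * cos (θ - φ) := by
  rw [Complex.dist_eq, Complex.sq_norm, Complex.normSq_apply]
  simp only [Complex.sub_re, Complex.sub_im, Complex.re_ofReal_mul, Complex.im_ofReal_mul,
    Complex.exp_ofReal_mul_I_re, Complex.exp_ofReal_mul_I_im, cos_sub]
  linear_combination r ^ 2 * sin_sq_add_cos_sq θ + s ^ 2 * sin_sq_add_cos_sq φ

noncomputable def perturbedPoint (N θ : ℝ) : ℂ :=
  ((1 + amplitude N * g θ : ℝ) : ℂ) * Complex.exp ((θ : ℂ) * Complex.I)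

lemma perturbedPoint_periodic (N : ℝ) : Function.Periodic (perturbedPoint N) (2 * π) := fun θ => by
  rw [perturbedPoint, perturbedPoint, g_periodic θ]
  push_cast
  rw [add_mul _ _ Complex.I, Complex.exp_periodic]

lemma dist_perturbedPoint_add_pi (N θ : ℝ) :
    dist (perturbedPoint N θ) (perturbedPoint N (θ + π)) = 2 := by
  have hsub : perturbedPoint N θ - perturbedPoint N (θ + π) = 2 * Complex.exp (θ * Complex.I) := by
    rw [perturbedPoint, perturbedPoint, g_antiperiodic θ]
    push_cast
    rw [add_mul _ _ Complex.I, Complex.exp_antiperiodic]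
    ring
  rw [dist_eq_norm, hsub, norm_mul, Complex.norm_exp_ofReal_mul_I]
  norm_num

lemma dist_perturbedPoint_le_two {n : ℕ} (hn : 8 ≤ n) {θ φ : ℝ} (d : ℤ)
    (h : θ - φ - π = 2 * π * d / n) : dist (perturbedPoint n θ) (perturbedPoint n φ) ≤ 2 := by
  have hN : (8 : ℝ) ≤ n := by exact_mod_cast hn
  set v := ‖((θ - φ - π : ℝ) : AddCircle (2 * π))‖ with hv_def
  have hcos : cos (θ - φ) = -cos v := by
    rw [hv_def, ← arccos_cos_eq_norm_addCircle, cos_arccos (neg_one_le_cos _) (cos_le_one _),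
      cos_sub_pi, neg_neg]
  have hvπ : v ≤ π := by
    rw [hv_def, ← arccos_cos_eq_norm_addCircle]; exact arccos_le_pi _
  have hv : v = 0 ∨ 2 * π / n ≤ v := by
    rw [hv_def, h]
    exact AddCircle.norm_coe_mul_div_eq_zero_or_div_le (by positivity) (by omega) d
  have hwv : g θ + g φ ≤ 6 / π * v := by
    have := g_sub_le θ (φ + π)
    rwa [g_antiperiodic, sub_neg_eq_add, ← sub_sub] at this
  have hw : g θ + g φ ≤ 2 := by
    linarith [(abs_le.1 (abs_g_le_one θ)).2, (abs_le.1 (abs_g_le_one φ)).2]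
  have key := sq_add_sq_add_two_mul_mul_le_four (amplitude_nonneg (by linarith))
    ((amplitude_le hN).trans (by norm_num)) (abs_g_le_one θ) (abs_g_le_one φ)
    (cos_le_one v) (two_mul_amplitude_mul_le hN hvπ hv hw hwv)
  rw [← sq_le_sq₀ dist_nonneg zero_le_two, perturbedPoint, perturbedPoint,
    dist_ofReal_mul_exp_sq, hcos]
  linarith

theorem stmt16 (m n : ℕ) (hn : n = 2 * m) (h8 : 8 ≤ n)
    (z : Fin n → ℂ)
    (hz : ∀ k : Fin n, z k =
      ((1 + (Real.pi ^ 2 / (12 * n) * (1 - 1 / (n : ℝ))) *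
          g (2 * Real.pi * ((k : ℕ) : ℝ) / n) : ℝ) : ℂ) *
        Complex.exp (((2 * Real.pi * ((k : ℕ) : ℝ) / n : ℝ) : ℂ) * Complex.I)) :
    (∀ i j : Fin n, dist (z i) (z j) ≤ 2) ∧
    ∀ k : Fin n,
      dist (z k) (z ⟨((k : ℕ) + m) % n, Nat.mod_lt _ (by omega)⟩) = 2 := by
  have hzk : ∀ k : Fin n, z k = perturbedPoint n (2 * π * (k : ℕ) / n) := hz
  have hnm : (n : ℝ) = 2 * m := by exact_mod_cast hn
  refine ⟨fun i j => ?_, fun k => ?_⟩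
  · rw [hzk i, hzk j]
    refine dist_perturbedPoint_le_two h8 ((i : ℤ) - j - m) ?_
    field_simp
    push_cast
    linear_combination -hnm
  · rw [hzk k, hzk _]
    have hmod : (((k + m) % n : ℕ) : ℝ) = k + m - n * ((k + m) / n : ℕ) := by
      rw [eq_sub_iff_add_eq]; exact_mod_cast Nat.mod_add_div (k + m) n
    have hangle : 2 * π * (((k + m) % n : ℕ) : ℝ) / n
        = 2 * π * (k : ℕ) / n + π - ((k + m) / n : ℕ) * (2 * π) := by
      rw [hmod]; field_simp; linear_combination -hnm
    rw [Fin.val_mk, hangle, (perturbedPoint_periodic _).sub_nat_mul_eq, dist_perturbedPoint_add_pi]
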